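/- arXiv:2504.20536 — 5 statements merged into one kernel-verified Lean document; each statement's English description precedes it below -/
import Mathlib

section
/- Let I be a finite nonempty set with n elements and let c, c' : I \u2192 \u211d be vectors with c i \u2265 0 and c' i \u2265 0 for all i and \u03a3_{i\u2208I} c i = \u03a3_{i\u2208I} c' i. Then there exists a sequence of at most n \u2212 1 pairwise transfers, each with a nonnegative amount, transforming c into c' such that every intermediate vector in the sequence is nonnegative in all coordinates. -/
/-!
Induct on the set `s` outside of which `c` and `c'` already agree. Since both have the same sum
over `s`, some `i ∈ s` has `c' i ≤ c i`; moving the surplus `c i - c' i` from `i` to any other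
`j ∈ s` fixes coordinate `i` without making anything negative, and leaves the sum over
`s.erase i` right. Each step fixes one coordinate, and the last one is fixed for free.
-/

/-- A pairwise transfer `(i, j, x)` on a vector `c : I → ℝ` decreases `c i`
by `x` and increases `c j` by `x`, leaving all other indices unchanged. -/
def pairTransfer {I : Type*} [DecidableEq I] (c : I → ℝ) (t : I × I × ℝ) : I → ℝ :=
  fun k => c k - (if k = t.1 then t.2.2 else 0) + (if k = t.2.1 then t.2.2 else 0)

section

variable {I : Type*} [DecidableEq I]

section pairTransfer

variable (c : I → ℝ) {i j : I} (x : ℝ)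

theorem pairTransfer_apply_left (hij : i ≠ j) : pairTransfer c (i, j, x) i = c i - x := by
  simp [pairTransfer, hij]

theorem pairTransfer_apply_of_ne {k : I} (hki : k ≠ i) (hkj : k ≠ j) :
    pairTransfer c (i, j, x) k = c k := by
  simp [pairTransfer, hki, hkj]

theorem sum_pairTransfer {s : Finset I} (hi : i ∈ s) (hj : j ∈ s) :
    ∑ k ∈ s, pairTransfer c (i, j, x) k = ∑ k ∈ s, c k := by
  simp [pairTransfer, Finset.sum_add_distrib, Finset.sum_sub_distrib, Finset.sum_ite_eq', hi, hj]

theorem pairTransfer_nonneg {c : I → ℝ} (hc : 0 ≤ c) (hx : 0 ≤ x) (hx' : x ≤ c i) :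
    0 ≤ pairTransfer c (i, j, x) := by
  intro k
  have hck : 0 ≤ c k := hc k
  rcases eq_or_ne k i with rfl | hki
  · simp only [pairTransfer, Pi.zero_apply]
    split_ifs <;> linarith
  · simp only [pairTransfer, if_neg hki, Pi.zero_apply]
    split_ifs <;> linarith

end pairTransfer

def IsNonnegTransferSeq (c : I → ℝ) (ts : List (I × I × ℝ)) : Prop :=
  (∀ t ∈ ts, t.1 ≠ t.2.1 ∧ 0 ≤ t.2.2) ∧ ∀ pre, pre <+: ts → 0 ≤ pre.foldl pairTransfer c

theorem isNonnegTransferSeq_nil {c : I → ℝ} (hc : 0 ≤ c) : IsNonnegTransferSeq c [] :=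
  ⟨by simp, fun pre hpre => by simpa [List.prefix_nil.mp hpre] using hc⟩

theorem IsNonnegTransferSeq.cons {c : I → ℝ} {t : I × I × ℝ} {ts : List (I × I × ℝ)}
    (ht : t.1 ≠ t.2.1 ∧ 0 ≤ t.2.2) (hc : 0 ≤ c) (hts : IsNonnegTransferSeq (pairTransfer c t) ts) :
    IsNonnegTransferSeq c (t :: ts) := by
  refine ⟨by simpa [ht] using hts.1, fun pre hpre => ?_⟩
  rcases List.prefix_cons_iff.mp hpre with rfl | ⟨pre', rfl, hpre'⟩
  · exact hc
  · exact hts.2 pre' hpre'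

theorem eq_of_eqOn_compl_of_card_le_one {s : Finset I} {c c' : I → ℝ} (hs : s.card ≤ 1)
    (hout : ∀ i ∉ s, c i = c' i) (hsum : ∑ i ∈ s, c i = ∑ i ∈ s, c' i) : c = c' := by
  funext k
  by_cases hk : k ∈ s
  · have hsk : s = {k} :=
      Finset.eq_singleton_iff_unique_mem.mpr ⟨hk, fun b hb => Finset.card_le_one.mp hs b hb k hk⟩
    simpa [hsk] using hsum
  · exact hout k hk

theorem exists_nonnegTransferSeq_of_eqOn_compl (s : Finset I) {c c' : I → ℝ} (hc : 0 ≤ c)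
    (hc' : 0 ≤ c') (hout : ∀ i ∉ s, c i = c' i) (hsum : ∑ i ∈ s, c i = ∑ i ∈ s, c' i) :
    ∃ ts : List (I × I × ℝ), ts.length ≤ s.card - 1 ∧ IsNonnegTransferSeq c ts ∧
      ts.foldl pairTransfer c = c' := by
  induction s using Finset.strongInduction generalizing c with
  | _ s ih =>
  rcases le_or_gt s.card 1 with hs | hs
  · exact ⟨[], by simp, isNonnegTransferSeq_nil hc,
      eq_of_eqOn_compl_of_card_le_one hs hout hsum⟩
  obtain ⟨i, hi, hci⟩ : ∃ i ∈ s, c' i ≤ c i :=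
    Finset.exists_le_of_sum_le (Finset.card_pos.mp (by omega)) hsum.ge
  obtain ⟨j, hj, hji⟩ := Finset.exists_mem_ne hs i
  set d := pairTransfer c (i, j, c i - c' i) with hd
  have hdi : d i = c' i := by rw [hd, pairTransfer_apply_left _ _ hji.symm]; ring
  have hout' : ∀ k ∉ s.erase i, d k = c' k := by
    intro k hk
    by_cases hki : k = i
    · rw [hki, hdi]
    · have hks : k ∉ s := fun h => hk (Finset.mem_erase.mpr ⟨hki, h⟩)
      rw [hd, pairTransfer_apply_of_ne _ _ hki (ne_of_mem_of_not_mem hj hks).symm, hout k hks]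
  have hsum' : ∑ k ∈ s.erase i, d k = ∑ k ∈ s.erase i, c' k := by
    rw [Finset.sum_erase_eq_sub hi, Finset.sum_erase_eq_sub hi, sum_pairTransfer _ _ hi hj, hsum,
      hdi]
  obtain ⟨ts, hlen, hts, hfold⟩ := ih (s.erase i) (Finset.erase_ssubset hi)
    (pairTransfer_nonneg _ hc (sub_nonneg.mpr hci) (sub_le_self _ (hc' i))) hout' hsum'
  refine ⟨(i, j, c i - c' i) :: ts, ?_, hts.cons ⟨hji.symm, sub_nonneg.mpr hci⟩ hc, hfold⟩
  rw [Finset.card_erase_of_mem hi] at hlen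
  simp only [List.length_cons]
  omega

end

theorem reachable_by_pairwise_transfers_general
    {I : Type*} [Fintype I] [DecidableEq I]
    (c c' : I → ℝ) (hc : ∀ i, 0 ≤ c i) (hc' : ∀ i, 0 ≤ c' i)
    (hsum : ∑ i : I, c i = ∑ i : I, c' i) :
    ∃ ts : List (I × I × ℝ),
      ts.length ≤ Fintype.card I - 1 ∧
      (∀ t ∈ ts, t.1 ≠ t.2.1 ∧ 0 ≤ t.2.2) ∧
      (∀ pre : List (I × I × ℝ), pre <+: ts →
        ∀ i : I, 0 ≤ (pre.foldl pairTransfer c) i) ∧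
      ts.foldl pairTransfer c = c' := by
  obtain ⟨ts, hlen, ⟨hmoves, hpre⟩, hfold⟩ :=
    exists_nonnegTransferSeq_of_eqOn_compl Finset.univ hc hc' (by simp) hsum
  exact ⟨ts, hlen, hmoves, hpre, hfold⟩

/-- Any nonnegative vector `c'` with the same total as a nonnegative vector `c`
is reachable from `c` by at most `n - 1` pairwise transfers with nonnegative
amounts, keeping all intermediate vectors nonnegative. -/
theorem reachable_by_pairwise_transfers
    {I : Type*} [Fintype I] [DecidableEq I] [Nonempty I]
    (c c' : I → ℝ) (hc : ∀ i, 0 ≤ c i) (hc' : ∀ i, 0 ≤ c' i)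
    (hsum : ∑ i : I, c i = ∑ i : I, c' i) :
    ∃ ts : List (I × I × ℝ),
      ts.length ≤ Fintype.card I - 1 ∧
      (∀ t ∈ ts, t.1 ≠ t.2.1 ∧ 0 ≤ t.2.2) ∧
      (∀ pre : List (I × I × ℝ), pre <+: ts →
        ∀ i : I, 0 ≤ (pre.foldl pairTransfer c) i) ∧
      ts.foldl pairTransfer c = c' :=
  reachable_by_pairwise_transfers_general c c' hc hc' hsum
end

section
/- Let G be a simple graph on a finite vertex set V and b\u2080 : V \u2192 \u211d with b\u2080 w \u2265 0 for all w. Suppose a finite sequence of bind-transfers is applied successively in which every intermediate balance vector is nonnegative in all coordinates, producing final balances b. Then for every vertex v, b v is at most the sum of b\u2080 over the connected component of v in G. In particular: (i) if some vertex outside the connected component of v has positive initial balance, then b v < \u03a3_{w\u2208V} b\u2080 w; and (ii) if G is a perfect matching (every vertex is incident to exactly one edge) and w is the vertex matched to v, then b v \u2264 b\u2080 v + b\u2080 w \u2264 2 \u00b7 max_{u\u2208V} b\u2080 u. -/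
/-- A bind-transfer `(u, v, x)` on a balance vector `b : V → ℝ` decreases
`b u` by `x` and increases `b v` by `x`, leaving all other vertices
unchanged. -/
def bindTransfer {V : Type*} [DecidableEq V] (b : V → ℝ) (t : V × V × ℝ) : V → ℝ :=
  fun k => b k - (if k = t.1 then t.2.2 else 0) + (if k = t.2.1 then t.2.2 else 0)

/-!
A bind-transfer along an edge conserves the total balance of every set of vertices containing
both endpoints of the edge or neither, in particular of every connected component. Since all
balances stay nonnegative, the final balance of `v` is at most the final, hence the initial,
total of its component. In a perfect matching the component of `v` is `{v, w}`.
-/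

open Finset

section BindTransfer

variable {V : Type*} [DecidableEq V]

theorem sum_bindTransfer_of_mem_iff (s : Finset V) (b : V → ℝ) (t : V × V × ℝ)
    (ht : t.1 ∈ s ↔ t.2.1 ∈ s) :
    ∑ k ∈ s, bindTransfer b t k = ∑ k ∈ s, b k := by
  simp only [bindTransfer, sum_add_distrib, sum_sub_distrib, sum_ite_eq', ht]
  ring

theorem sum_foldl_bindTransfer_of_mem_iff (s : Finset V) (ops : List (V × V × ℝ))
    (hops : ∀ t ∈ ops, (t.1 ∈ s ↔ t.2.1 ∈ s)) (b : V → ℝ) :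
    ∑ k ∈ s, ops.foldl bindTransfer b k = ∑ k ∈ s, b k := by
  induction ops generalizing b with
  | nil => rfl
  | cons t ops ih =>
    rw [List.foldl_cons, ih (fun t' ht' => hops t' (List.mem_cons_of_mem t ht')),
      sum_bindTransfer_of_mem_iff s b t (hops t List.mem_cons_self)]

theorem foldl_bindTransfer_apply_le_sum {s : Finset V} {ops : List (V × V × ℝ)}
    (hops : ∀ t ∈ ops, (t.1 ∈ s ↔ t.2.1 ∈ s)) {b : V → ℝ}
    (hnn : ∀ u, 0 ≤ ops.foldl bindTransfer b u) {v : V} (hv : v ∈ s) :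
    ops.foldl bindTransfer b v ≤ ∑ k ∈ s, b k :=
  calc ops.foldl bindTransfer b v
      ≤ ∑ k ∈ s, ops.foldl bindTransfer b k := single_le_sum (fun u _ => hnn u) hv
    _ = ∑ k ∈ s, b k := sum_foldl_bindTransfer_of_mem_iff s ops hops b

end BindTransfer

namespace SimpleGraph

variable {V : Type*} {G : SimpleGraph V}

theorem Adj.reachable_iff_reachable {a b : V} (h : G.Adj a b) (v : V) :
    G.Reachable v a ↔ G.Reachable v b :=
  ⟨fun hv => hv.trans h.reachable, fun hv => hv.trans h.symm.reachable⟩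

theorem eq_or_eq_of_reachable_of_existsUnique_adj (hG : ∀ u, ∃! u', G.Adj u u')
    {v w u : V} (hvw : G.Adj v w) (hu : G.Reachable v u) : u = v ∨ u = w := by
  rw [reachable_eq_reflTransGen] at hu
  induction hu with
  | refl => exact .inl rfl
  | tail _ hadj ih =>
    rcases ih with rfl | rfl
    · exact .inr ((hG _).unique hadj hvw)
    · exact .inl ((hG _).unique hadj hvw.symm)

end SimpleGraph

open scoped Classical in
/-- Under bind-transfers along the edges of `G` that keep all balances
nonnegative, the final balance of any vertex `v` is bounded by the initial
total of its connected component; it is strictly below the global total when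
positive balance exists outside the component; and if `G` is a perfect
matching then `v`'s balance is bounded by `b₀ v + b₀ w ≤ 2 · max b₀` where
`w` is matched to `v`. -/
theorem bind_transfer_capacity_bound
    {V : Type*} [Fintype V] [DecidableEq V] (G : SimpleGraph V)
    (b₀ : V → ℝ) (h0 : ∀ w, 0 ≤ b₀ w)
    (ops : List (V × V × ℝ))
    (hadj : ∀ t ∈ ops, G.Adj t.1 t.2.1)
    (hnn : ∀ pre : List (V × V × ℝ), pre <+: ops →
      ∀ u : V, 0 ≤ (pre.foldl bindTransfer b₀) u) :
    ∀ v : V,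
      ((ops.foldl bindTransfer b₀) v
          ≤ ∑ w : V, if G.Reachable v w then b₀ w else 0) ∧
      ((∃ w : V, ¬ G.Reachable v w ∧ 0 < b₀ w) →
        (ops.foldl bindTransfer b₀) v < ∑ w : V, b₀ w) ∧
      (∀ w : V, (∀ u : V, ∃! u' : V, G.Adj u u') → G.Adj v w →
        (ops.foldl bindTransfer b₀) v ≤ b₀ v + b₀ w ∧
        b₀ v + b₀ w ≤ 2 * Finset.univ.sup' ⟨v, Finset.mem_univ v⟩ b₀) := by
  intro v
  set comp := univ.filter (G.Reachable v)
  have hbound : ops.foldl bindTransfer b₀ v ≤ ∑ w ∈ comp, b₀ w :=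
    foldl_bindTransfer_apply_le_sum
      (fun t ht => by simpa [comp] using (hadj t ht).reachable_iff_reachable v)
      (hnn ops (List.prefix_refl ops)) (by simp [comp])
  refine ⟨by rwa [← sum_filter], ?_, fun w hG hvw => ⟨?_, ?_⟩⟩
  · rintro ⟨w, hvw, hw⟩
    exact hbound.trans_lt <|
      sum_lt_sum_of_subset (subset_univ comp) (mem_univ w) (by simpa [comp]) hw fun u _ _ => h0 u
  · have hcomp : comp ⊆ {v, w} := fun u hu => by
      simpa using G.eq_or_eq_of_reachable_of_existsUnique_adj hG hvw (mem_filter.1 hu).2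
    calc ops.foldl bindTransfer b₀ v ≤ ∑ u ∈ comp, b₀ u := hbound
      _ ≤ ∑ u ∈ {v, w}, b₀ u := sum_le_sum_of_subset_of_nonneg hcomp fun u _ _ => h0 u
      _ = b₀ v + b₀ w := sum_pair hvw.ne
  · linarith [le_sup' b₀ (mem_univ v), le_sup' b₀ (mem_univ w)]
end

section
/- Consider a Starfish merge state over a finite set I given by hub balances h : I \u2192 \u211d, user balances u : I \u2192 \u211d, and capacities cap : I \u2192 \u211d satisfying h i + u i = cap i for every i. For any finite sequence of merge updates applied successively: (a) every user balance u i is unchanged; (b) the hub's total balance \u03a3_{i\u2208I} h i is unchanged; and (c) the invariant h i + u i = cap i holds for every edge i in every intermediate state and in the final state. -/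
/-!
A merge update moves an amount `x` from edge `i` to edge `j` simultaneously in the hub
balances and in the capacities. Hence the user balances, the hub total `∑ i, h i`
(which loses `x` and regains it) and each defect `h k + u k - cap k` are conserved by a
single update, and so along any sequence of updates.
-/

/-- A merge update `(i, j, x)` on a Starfish merge state `(h, u, cap)`
decreases both `cap i` and `h i` by `x` and increases both `cap j` and `h j`
by `x`, leaving all user balances and all other edges unchanged. -/
def mergeUpdate {I : Type*} [DecidableEq I]
    (s : (I → ℝ) × (I → ℝ) × (I → ℝ)) (t : I × I × ℝ) :
    (I → ℝ) × (I → ℝ) × (I → ℝ) :=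
  (fun k => s.1 k - (if k = t.1 then t.2.2 else 0) + (if k = t.2.1 then t.2.2 else 0),
   s.2.1,
   fun k => s.2.2 k - (if k = t.1 then t.2.2 else 0) + (if k = t.2.1 then t.2.2 else 0))

theorem List.foldl_conserved {α β γ : Type*} (g : α → γ) {f : α → β → α}
    (hf : ∀ a b, g (f a b) = g a) (a : α) (l : List β) : g (l.foldl f a) = g a :=
  (List.foldl_hom g fun x y => (hf x y).symm).symm.trans (List.foldl_fixed _)

abbrev MergeState (I : Type*) := (I → ℝ) × (I → ℝ) × (I → ℝ)

def MergeState.IsBalanced {I : Type*} (s : MergeState I) : Prop :=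
  ∀ i, s.1 i + s.2.1 i = s.2.2 i

section

variable {I : Type*} [DecidableEq I]

theorem mergeUpdate_users (s : MergeState I) (t : I × I × ℝ) :
    (mergeUpdate s t).2.1 = s.2.1 :=
  rfl

theorem sum_hub_mergeUpdate [Fintype I] (s : MergeState I) (t : I × I × ℝ) :
    ∑ i, (mergeUpdate s t).1 i = ∑ i, s.1 i := by
  simp [mergeUpdate, Finset.sum_add_distrib, Finset.sum_sub_distrib]

theorem isBalanced_mergeUpdate {s : MergeState I} (hs : s.IsBalanced)
    (t : I × I × ℝ) : MergeState.IsBalanced (mergeUpdate s t) := fun i => by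
  simp only [mergeUpdate]
  linarith [hs i]

theorem foldl_mergeUpdate_users (l : List (I × I × ℝ)) (s : MergeState I) :
    (l.foldl mergeUpdate s).2.1 = s.2.1 :=
  List.foldl_conserved (fun s : MergeState I => s.2.1) mergeUpdate_users s l

theorem sum_hub_foldl_mergeUpdate [Fintype I] (l : List (I × I × ℝ)) (s : MergeState I) :
    ∑ i, (l.foldl mergeUpdate s).1 i = ∑ i, s.1 i :=
  List.foldl_conserved (fun s : MergeState I => ∑ i, s.1 i) sum_hub_mergeUpdate s l

theorem isBalanced_foldl_mergeUpdate {s : MergeState I} (hs : s.IsBalanced)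
    (l : List (I × I × ℝ)) : MergeState.IsBalanced (l.foldl mergeUpdate s) :=
  List.foldlRecOn (motive := MergeState.IsBalanced) l mergeUpdate hs
    fun _ hs' t _ => isBalanced_mergeUpdate hs' t

end

theorem merge_updates_preserve_users_and_hub_total_general
    {I : Type*} [Fintype I] [DecidableEq I]
    (h u cap : I → ℝ) (hinv : ∀ i, h i + u i = cap i)
    (ops : List (I × I × ℝ)) :
    (∀ i : I, (ops.foldl mergeUpdate (h, u, cap)).2.1 i = u i) ∧
    (∑ i : I, (ops.foldl mergeUpdate (h, u, cap)).1 i = ∑ i : I, h i) ∧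
    (∀ pre : List (I × I × ℝ), pre <+: ops → ∀ i : I,
      (pre.foldl mergeUpdate (h, u, cap)).1 i
          + (pre.foldl mergeUpdate (h, u, cap)).2.1 i
        = (pre.foldl mergeUpdate (h, u, cap)).2.2 i) :=
  have balanced : MergeState.IsBalanced (h, u, cap) := hinv
  ⟨congrFun (foldl_mergeUpdate_users ops _), sum_hub_foldl_mergeUpdate ops _,
    fun pre _ => isBalanced_foldl_mergeUpdate balanced pre⟩

/-- Merge updates never change any user balance, preserve the hub's total
balance, and maintain the invariant `h i + u i = cap i` on every edge in all
intermediate states and in the final state. -/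
theorem merge_updates_preserve_users_and_hub_total
    {I : Type*} [Fintype I] [DecidableEq I]
    (h u cap : I → ℝ) (hinv : ∀ i, h i + u i = cap i)
    (ops : List (I × I × ℝ)) (hops : ∀ t ∈ ops, t.1 ≠ t.2.1) :
    (∀ i : I, (ops.foldl mergeUpdate (h, u, cap)).2.1 i = u i) ∧
    (∑ i : I, (ops.foldl mergeUpdate (h, u, cap)).1 i = ∑ i : I, h i) ∧
    (∀ pre : List (I × I × ℝ), pre <+: ops → ∀ i : I,
      (pre.foldl mergeUpdate (h, u, cap)).1 i
          + (pre.foldl mergeUpdate (h, u, cap)).2.1 i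
        = (pre.foldl mergeUpdate (h, u, cap)).2.2 i) :=
  merge_updates_preserve_users_and_hub_total_general h u cap hinv ops
end

section
/- Define a Starfish system state as a triple (\u2113, C, E), where \u2113 : P \u2192 \u211d is the ledger over a finite party set P, C is a finite multiset of channel states (pairs (a, b) \u2208 \u211d\u00b2), and E is a finite multiset of edge states (pairs (h, u) \u2208 \u211d\u00b2). Define the total coin supply of a state as \u03a3_{p\u2208P} \u2113 p + \u03a3_{(a,b)\u2208C} (a + b) + \u03a3_{(h,u)\u2208E} (h + u). Consider the transition relation generated by the following operations: openChannel (subtract amounts a \u2265 0 and b \u2265 0 from two ledger entries and insert the channel (a, b) into C); updateChannel (replace a channel (a, b) \u2208 C by (a + x, b \u2212 x)); openMerge (replace a channel (a, b) \u2208 C with a \u2265 c by (a \u2212 c, b) and insert the edge (c, 0) into E); updateEdge (replace an edge (h, u) \u2208 E by (h + x, u \u2212 x)); updateMerge (replace two edges (h\u2081, u\u2081), (h\u2082, u\u2082) \u2208 E by (h\u2081 \u2212 x, u\u2081) and (h\u2082 + x, u\u2082)); closeMerge (remove an edge (h, u) from E and replace a channel (a, b) \u2208 C by (a + h, b + u));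 closeChannel (remove a channel (a, b) from C and add a and b to two ledger entries). Then every single operation, and hence every finite sequence of operations, preserves the total coin supply of the state. -/
structure SysState (P : Type*) where
  ledger : P → ℝ
  channels : Multiset (ℝ × ℝ)
  edges : Multiset (ℝ × ℝ)

noncomputable def SysState.total {P : Type*} [Fintype P] (s : SysState P) : ℝ :=
  (∑ p : P, s.ledger p)
    + (s.channels.map fun c => c.1 + c.2).sum
    + (s.edges.map fun e => e.1 + e.2).sum

inductive SysStep {P : Type*} [DecidableEq P] : SysState P → SysState P → Prop
  | openChannel (s : SysState P) (p q : P) (a b : ℝ) (ha : 0 ≤ a) (hb : 0 ≤ b) :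
      SysStep s ⟨fun r => s.ledger r - (if r = p then a else 0) - (if r = q then b else 0),
                 (a, b) ::ₘ s.channels, s.edges⟩
  | updateChannel (s : SysState P) (a b x : ℝ) (h : (a, b) ∈ s.channels) :
      SysStep s ⟨s.ledger, (a + x, b - x) ::ₘ s.channels.erase (a, b), s.edges⟩
  | openMerge (s : SysState P) (a b c : ℝ) (h : (a, b) ∈ s.channels) (hc : c ≤ a) :
      SysStep s ⟨s.ledger, (a - c, b) ::ₘ s.channels.erase (a, b), (c, 0) ::ₘ s.edges⟩
  | updateEdge (s : SysState P) (h u x : ℝ) (he : (h, u) ∈ s.edges) :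
      SysStep s ⟨s.ledger, s.channels, (h + x, u - x) ::ₘ s.edges.erase (h, u)⟩
  | updateMerge (s : SysState P) (h₁ u₁ h₂ u₂ x : ℝ)
      (he₁ : (h₁, u₁) ∈ s.edges) (he₂ : (h₂, u₂) ∈ s.edges.erase (h₁, u₁)) :
      SysStep s ⟨s.ledger, s.channels,
                 (h₁ - x, u₁) ::ₘ (h₂ + x, u₂) ::ₘ (s.edges.erase (h₁, u₁)).erase (h₂, u₂)⟩
  | closeMerge (s : SysState P) (h u a b : ℝ)
      (he : (h, u) ∈ s.edges) (hc : (a, b) ∈ s.channels) :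
      SysStep s ⟨s.ledger, (a + h, b + u) ::ₘ s.channels.erase (a, b), s.edges.erase (h, u)⟩
  | closeChannel (s : SysState P) (p q : P) (a b : ℝ) (h : (a, b) ∈ s.channels) :
      SysStep s ⟨fun r => s.ledger r + (if r = p then a else 0) + (if r = q then b else 0),
                 s.channels.erase (a, b), s.edges⟩

theorem SysStep.total_eq {P : Type*} [Fintype P] [DecidableEq P] {s s' : SysState P}
    (hstep : SysStep s s') : s'.total = s.total := by
  cases hstep with
  | openChannel =>
    simp only [SysState.total, Multiset.map_cons, Multiset.sum_cons, Finset.sum_sub_distrib,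
      Finset.sum_ite_eq', Finset.mem_univ, if_true]
    ring
  | updateChannel _ _ _ h | openMerge _ _ _ h | updateEdge _ _ _ h =>
    rw [SysState.total, SysState.total, ← Multiset.sum_map_erase h]
    simp only [Multiset.map_cons, Multiset.sum_cons]
    ring
  | updateMerge _ _ _ _ _ he₁ he₂ =>
    rw [SysState.total, SysState.total, ← Multiset.sum_map_erase he₁,
      ← Multiset.sum_map_erase he₂]
    simp only [Multiset.map_cons, Multiset.sum_cons]
    ring
  | closeMerge _ _ _ _ he hc =>
    rw [SysState.total, SysState.total, ← Multiset.sum_map_erase he, ← Multiset.sum_map_erase hc]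
    simp only [Multiset.map_cons, Multiset.sum_cons]
    ring
  | closeChannel _ _ _ _ h =>
    rw [SysState.total, SysState.total, ← Multiset.sum_map_erase h]
    simp only [Finset.sum_add_distrib, Finset.sum_ite_eq', Finset.mem_univ, if_true]
    ring

/-- Every single Starfish operation, and hence every finite sequence of
operations, preserves the total coin supply of the system state. -/
theorem starfish_preserves_total_supply
    {P : Type*} [Fintype P] [DecidableEq P] :
    (∀ s s' : SysState P, SysStep s s' → s'.total = s.total) ∧
    (∀ s s' : SysState P, Relation.ReflTransGen SysStep s s' → s'.total = s.total) := by
  refine ⟨fun _ _ ↦ SysStep.total_eq, fun s s' hss' ↦ ?_⟩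
  induction hss' with
  | refl => rfl
  | tail _ hstep ih => rw [hstep.total_eq, ih]
end

section
/- Consider a Starfish merge state over a finite nonempty set I of edges given by hub balances h : I \u2192 \u211d and user balances u : I \u2192 \u211d, all nonnegative, with edge capacities cap i = h i + u i. Fix an edge j \u2208 I and an amount a with 0 \u2264 a \u2264 \u03a3_{i\u2208I} h i. Then there exists a finite sequence of operations, each of which is either (i) a merge update with a nonnegative transfer amount not exceeding the current hub balance of its source edge, or (ii) an edge payment on edge j by the hub of a nonnegative amount not exceeding the current hub balance of edge j (decreasing h j and increasing u j by that amount), such that all hub and user balances remain nonnegative throughout and the total amount paid by the hub to the user of edge j over the whole sequence equals a. In particular, the hub's entire merged balance \u03a3_{i\u2208I} h i, and not merely its single-edge balance h j, is available for payments to any one counterparty. -/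
/-- An operation on a Starfish merge state, either a merge update
`mu i i' x` transferring capacity `x` from edge `i` to edge `i'` (moving the
hub balance along with it), or an edge payment `pay y` by the hub to the
user of a fixed designated edge. -/
inductive StarfishOp (I : Type*) where
  | mu : I → I → ℝ → StarfishOp I
  | pay : ℝ → StarfishOp I

/-- Applying an operation to the state `(h, u)` of hub and user balances,
where edge payments happen on the designated edge `j`. -/
noncomputable def applyStarfishOp {I : Type*} [DecidableEq I] (j : I)
    (s : (I → ℝ) × (I → ℝ)) : StarfishOp I → (I → ℝ) × (I → ℝ)
  | .mu i i' x =>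
      (fun k => s.1 k - (if k = i then x else 0) + (if k = i' then x else 0), s.2)
  | .pay y =>
      (Function.update s.1 j (s.1 j - y), Function.update s.2 j (s.2 j + y))

/-- The amount paid by the hub to the user of the designated edge by one
operation. -/
def StarfishOp.paid {I : Type*} : StarfishOp I → ℝ
  | .mu _ _ _ => 0
  | .pay y => y

/-!
Merge the whole hub balance of every other edge into `j`, one merge update per edge; afterwards
the hub balance on `j` is `∑ i, h i`, and a single edge payment of `a` on `j` finishes. Validity of
a sequence is checked operation by operation: a valid operation keeps a nonnegative state
nonnegative, so every state reached along the way is nonnegative.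
-/

namespace StarfishOp

variable {I : Type*}

def mergeInto (j : I) (h : I → ℝ) (L : List I) : List (StarfishOp I) :=
  L.map fun i => .mu i j (h i)

theorem sum_paid_mergeInto {j : I} (h : I → ℝ) (L : List I) :
    ((mergeInto j h L).map paid).sum = 0 := by
  simp [mergeInto, Function.comp_def, paid]

variable [DecidableEq I] (j : I)

def IsValid (s : (I → ℝ) × (I → ℝ)) : StarfishOp I → Prop
  | .mu i i' x => i ≠ i' ∧ 0 ≤ x ∧ x ≤ s.1 i
  | .pay y => 0 ≤ y ∧ y ≤ s.1 j

def IsValidSeq : (I → ℝ) × (I → ℝ) → List (StarfishOp I) → Prop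
  | _, [] => True
  | s, op :: ops => op.IsValid j s ∧ IsValidSeq (applyStarfishOp j s op) ops

variable {j}

theorem IsValid.nonneg_apply {s : (I → ℝ) × (I → ℝ)} {op : StarfishOp I}
    (hop : op.IsValid j s) (hs : 0 ≤ s) : 0 ≤ applyStarfishOp j s op := by
  cases op with
  | mu i i' x =>
    obtain ⟨-, hx, hxs⟩ := hop
    refine ⟨fun k => ?_, hs.2⟩
    have hk : 0 ≤ s.1 k := hs.1 k
    change (0 : ℝ) ≤ _ - _ + _
    split_ifs <;> subst_vars <;> linarith
  | pay y =>
    obtain ⟨hy, hys⟩ := hop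
    refine ⟨fun k => ?_, fun k => ?_⟩ <;>
    · have hhub : 0 ≤ s.1 k := hs.1 k
      have huser : 0 ≤ s.2 k := hs.2 k
      simp only [applyStarfishOp, Function.update_apply, Prod.fst_zero, Prod.snd_zero,
        Pi.zero_apply]
      split_ifs with hk
      · subst hk; linarith
      · assumption

theorem isValidSeq_append {s : (I → ℝ) × (I → ℝ)} {l₁ l₂ : List (StarfishOp I)} :
    IsValidSeq j s (l₁ ++ l₂) ↔
      IsValidSeq j s l₁ ∧ IsValidSeq j (l₁.foldl (applyStarfishOp j) s) l₂ := by
  induction l₁ generalizing s with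
  | nil => simp [IsValidSeq]
  | cons op l₁ ih => simp [IsValidSeq, ih, and_assoc]

theorem IsValidSeq.nonneg_foldl {s : (I → ℝ) × (I → ℝ)} {ops : List (StarfishOp I)}
    (hops : IsValidSeq j s ops) (hs : 0 ≤ s) : 0 ≤ ops.foldl (applyStarfishOp j) s := by
  induction ops generalizing s with
  | nil => exact hs
  | cons op ops ih => exact ih hops.2 (hops.1.nonneg_apply hs)

theorem IsValidSeq.isValid_get {s : (I → ℝ) × (I → ℝ)} {ops : List (StarfishOp I)}
    (hops : IsValidSeq j s ops) (k : Fin ops.length) :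
    (ops.get k).IsValid j ((ops.take k).foldl (applyStarfishOp j) s) := by
  rw [← List.take_append_drop k ops, isValidSeq_append, List.drop_eq_getElem_cons k.isLt]
    at hops
  exact hops.2.1

theorem IsValidSeq.nonneg_of_prefix {s : (I → ℝ) × (I → ℝ)} {ops pre : List (StarfishOp I)}
    (hops : IsValidSeq j s ops) (hs : 0 ≤ s) (hpre : pre <+: ops) :
    0 ≤ pre.foldl (applyStarfishOp j) s := by
  rw [← List.prefix_iff_eq_append.mp hpre, isValidSeq_append] at hops
  exact hops.1.nonneg_foldl hs

theorem isValidSeq_mergeInto {L : List I} (hL : L.Nodup) (hj : j ∉ L) {h : I → ℝ}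
    (hh : ∀ i ∈ L, 0 ≤ h i) (u : I → ℝ) :
    IsValidSeq j (h, u) (mergeInto j h L) ∧
      ((mergeInto j h L).foldl (applyStarfishOp j) (h, u)).1 j = h j + (L.map h).sum := by
  induction L generalizing h with
  | nil => simp [mergeInto, IsValidSeq]
  | cons i L ih =>
    obtain ⟨hiL, hL⟩ := List.nodup_cons.mp hL
    obtain ⟨hji, hjL⟩ := not_or.mp (List.mem_cons.not.mp hj)
    set h' := (applyStarfishOp j (h, u) (.mu i j (h i))).1
    have hagree : ∀ k ∈ L, h' k = h k := fun k hk => by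
      simp [h', applyStarfishOp, ne_of_mem_of_not_mem hk hiL, ne_of_mem_of_not_mem hk hjL]
    have hrest : mergeInto j h' L = mergeInto j h L :=
      List.map_congr_left fun k hk => by rw [hagree k hk]
    have hsum : (L.map h').sum = (L.map h).sum := by rw [List.map_congr_left hagree]
    have hh' : ∀ k ∈ L, 0 ≤ h' k := fun k hk => hagree k hk ▸ hh k (.tail _ hk)
    obtain ⟨hvalid, hfold⟩ := ih hL hjL hh'
    have hh'j : h' j = h j + h i := by simp [h', applyStarfishOp, hji]
    have hcons : mergeInto j h (i :: L) = .mu i j (h i) :: mergeInto j h L := rfl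
    rw [hcons, List.foldl_cons, ← hrest]
    exact ⟨⟨⟨Ne.symm hji, hh i (.head _), le_rfl⟩, hvalid⟩,
      hfold.trans (by rw [hsum, hh'j, List.map_cons, List.sum_cons, add_assoc])⟩

end StarfishOp

open StarfishOp in
/-- After merging, the hub's entire merged balance `∑ i, h i`, and not merely
its single-edge balance `h j`, is available for payments to the user of any
one edge `j`: for every amount `a` with `0 ≤ a ≤ ∑ i, h i` there is a finite
sequence of valid merge updates and edge payments on `j`, keeping all
balances nonnegative throughout, whose total payment to the user of `j`
equals `a`. -/
theorem hub_can_pay_total_merged_balance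
    {I : Type*} [Fintype I] [DecidableEq I]
    (h u : I → ℝ) (hh : ∀ i, 0 ≤ h i) (hu : ∀ i, 0 ≤ u i)
    (j : I) (a : ℝ) (ha0 : 0 ≤ a) (ha : a ≤ ∑ i : I, h i) :
    ∃ ops : List (StarfishOp I),
      (∀ k : Fin ops.length,
        match ops.get k with
        | .mu i i' x =>
            i ≠ i' ∧ 0 ≤ x ∧
              x ≤ ((ops.take k).foldl (applyStarfishOp j) (h, u)).1 i
        | .pay y =>
            0 ≤ y ∧ y ≤ ((ops.take k).foldl (applyStarfishOp j) (h, u)).1 j) ∧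
      (∀ pre : List (StarfishOp I), pre <+: ops → ∀ i : I,
        0 ≤ (pre.foldl (applyStarfishOp j) (h, u)).1 i ∧
        0 ≤ (pre.foldl (applyStarfishOp j) (h, u)).2 i) ∧
      (ops.map StarfishOp.paid).sum = a := by
  set L := (Finset.univ.erase j).toList
  obtain ⟨hmerge, hbalance⟩ := isValidSeq_mergeInto (j := j) (L := L)
    (Finset.nodup_toList _) (by simp [L]) (fun i _ => hh i) u
  have htotal : h j + (L.map h).sum = ∑ i, h i := by
    rw [Finset.sum_map_toList, Finset.add_sum_erase _ _ (Finset.mem_univ j)]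
  have hops : IsValidSeq j (h, u) (mergeInto j h L ++ [.pay a]) :=
    isValidSeq_append.mpr ⟨hmerge, ⟨ha0, hbalance ▸ htotal ▸ ha⟩, trivial⟩
  refine ⟨mergeInto j h L ++ [.pay a], hops.isValid_get, fun pre hpre i => ?_, ?_⟩
  · have hnonneg := hops.nonneg_of_prefix ⟨hh, hu⟩ hpre
    exact ⟨hnonneg.1 i, hnonneg.2 i⟩
  · simp [sum_paid_mergeInto, paid]
end
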